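/- arXiv:1703.04345 — 5 statements merged into one kernel-verified Lean document; each statement's English description precedes it below -/
import Mathlib

section
/- Every element of the group T'_{8·3^q} can be written uniquely in the form b^s w^t or b^s a w^t with 0 ≤ s < 4 and 0 ≤ t < 3^q; in particular the group has order 8·3^q. -/
/-!
The subgroup `Q = ⟨a, b⟩` consists of the eight elements `b^s a^e` (`ab = b⁻¹a`, `a² = b²`,
`b⁴ = 1`), and `w` normalises it since `w a w⁻¹ = b` and `w b w⁻¹ = ab`. So the finite set of
words `b^s a^e w^t` contains `1` and is stable under left multiplication by the generators, hence
is the whole group. The words are pairwise distinct: `t` is read off in the quotient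
`w ↦ 1 ∈ ℤ/3^q`, and `(s, e)` in the representation of `T'_{8·3^q}` onto `SL(2, 𝔽₃)`.
-/

/-- Relations of the generalized binary tetrahedral group
`T'_{8·3^q} = ⟨b, a, w | a² = b² = (ab)², a⁴ = w^{3^q} = 1, wa = bw, wb = abw⟩`,
with `b` the letter `0`, `a` the letter `1` and `w` the letter `2`. -/
def TprimeRels (q : ℕ) : Set (FreeGroup (Fin 3)) :=
  { (FreeGroup.of 1) ^ 2 * ((FreeGroup.of 0) ^ 2)⁻¹,
    (FreeGroup.of 1) ^ 2 * ((FreeGroup.of 1 * FreeGroup.of 0) ^ 2)⁻¹,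
    (FreeGroup.of 1) ^ 4,
    (FreeGroup.of 2) ^ (3 ^ q),
    (FreeGroup.of 2 * FreeGroup.of 1) * (FreeGroup.of 0 * FreeGroup.of 2)⁻¹,
    (FreeGroup.of 2 * FreeGroup.of 0) *
      (FreeGroup.of 1 * FreeGroup.of 0 * FreeGroup.of 2)⁻¹ }

/-- The generalized binary tetrahedral group `T'_{8·3^q}`. -/
abbrev Tprime (q : ℕ) := PresentedGroup (TprimeRels q)

/-- The generator `b` of `T'_{8·3^q}`. -/
def Tprime.b (q : ℕ) : Tprime q := PresentedGroup.of 0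

/-- The generator `a` of `T'_{8·3^q}`. -/
def Tprime.a (q : ℕ) : Tprime q := PresentedGroup.of 1

/-- The generator `w` of `T'_{8·3^q}`. -/
def Tprime.w (q : ℕ) : Tprime q := PresentedGroup.of 2

open Pointwise

-- For finite `S`, `x • S ⊆ S` forces `x • S = S`, so the generators stabilise `S`.
theorem Subgroup.closure_subset_of_smul_subset {G : Type*} [Group G] {X S : Set G}
    (hS : S.Finite) (hS₁ : 1 ∈ S) (hX : ∀ x ∈ X, x • S ⊆ S) :
    (closure X : Set G) ⊆ S := by
  have hstab : closure X ≤ MulAction.stabilizer G S := by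
    refine (closure_le _).2 fun x hx => ?_
    exact Set.eq_of_subset_of_ncard_le (hX x hx) (Set.ncard_smul_set x S).ge hS
  intro g hg
  have hgS : g • S = S := hstab hg
  simpa [hgS] using Set.smul_mem_smul_set (a := g) hS₁

namespace Tprime

variable {q : ℕ}

theorem a_sq : a q ^ 2 = b q ^ 2 :=
  PresentedGroup.mk_eq_mk_of_mul_inv_mem (by simp [TprimeRels])

theorem a_mul_b_sq : (a q * b q) ^ 2 = a q ^ 2 :=
  (PresentedGroup.mk_eq_mk_of_mul_inv_mem (by simp [TprimeRels])).symm

theorem a_pow_four : a q ^ 4 = 1 :=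
  PresentedGroup.one_of_mem (by simp [TprimeRels])

theorem w_pow_three_pow : w q ^ 3 ^ q = 1 :=
  PresentedGroup.one_of_mem (by simp [TprimeRels])

theorem w_mul_a : w q * a q = b q * w q :=
  PresentedGroup.mk_eq_mk_of_mul_inv_mem (by simp [TprimeRels])

theorem w_mul_b : w q * b q = a q * b q * w q :=
  PresentedGroup.mk_eq_mk_of_mul_inv_mem (by simp [TprimeRels])

theorem b_pow_four : b q ^ 4 = 1 := by
  rw [show 4 = 2 * 2 from rfl, pow_mul, ← a_sq, ← pow_mul, a_pow_four]

theorem a_mul_b : a q * b q = (b q)⁻¹ * a q := by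
  rw [eq_inv_mul_iff_mul_eq, ← mul_left_cancel_iff (a := a q)]
  simpa only [sq, mul_assoc] using a_mul_b_sq (q := q)

theorem a_mul_b_pow (n : ℕ) : a q * b q ^ n = b q ^ (3 * n) * a q := by
  have hb : (b q)⁻¹ = b q ^ 3 := inv_eq_of_mul_eq_one_right (by rw [← pow_succ', b_pow_four])
  rw [pow_mul]
  exact SemiconjBy.pow_right (hb ▸ a_mul_b) n

def quaternionSubgroup (q : ℕ) : Subgroup (Tprime q) := Subgroup.closure {a q, b q}

def quaternionForm (q : ℕ) (p : Fin 4 × Fin 2) : Tprime q :=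
  b q ^ (p.1 : ℕ) * a q ^ (p.2 : ℕ)

theorem b_pow_mul_a_pow_mem_range (n m : ℕ) :
    b q ^ n * a q ^ m ∈ Set.range (quaternionForm q) := by
  refine ⟨(⟨(n + 2 * (m / 2)) % 4, Nat.mod_lt _ four_pos⟩, ⟨m % 2, Nat.mod_lt _ two_pos⟩), ?_⟩
  calc quaternionForm q _ = b q ^ (n + 2 * (m / 2)) * a q ^ (m % 2) := by
        rw [quaternionForm, ← pow_eq_pow_mod _ b_pow_four]
    _ = b q ^ n * a q ^ m := by
        conv_rhs => rw [← Nat.div_add_mod m 2, pow_add, pow_mul, a_sq, ← pow_mul]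
        rw [pow_add, mul_assoc]

theorem quaternionSubgroup_subset_range :
    (quaternionSubgroup q : Set (Tprime q)) ⊆ Set.range (quaternionForm q) := by
  refine Subgroup.closure_subset_of_smul_subset (Set.finite_range _)
    ⟨(0, 0), by simp [quaternionForm]⟩ ?_
  rintro x (rfl | rfl) _ ⟨_, ⟨p, rfl⟩, rfl⟩ <;> dsimp only [smul_eq_mul, quaternionForm]
  · rw [← mul_assoc, a_mul_b_pow, mul_assoc, ← pow_succ']
    exact b_pow_mul_a_pow_mem_range _ _
  · rw [← mul_assoc, ← pow_succ']
    exact b_pow_mul_a_pow_mem_range _ _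

theorem w_mul_mul_inv_mem {x : Tprime q} (hx : x ∈ quaternionSubgroup q) :
    w q * x * (w q)⁻¹ ∈ quaternionSubgroup q := by
  have hle : quaternionSubgroup q ≤
      (quaternionSubgroup q).comap (MulAut.conj (w q)).toMonoidHom := by
    refine (Subgroup.closure_le _).2 ?_
    rintro y (rfl | rfl)
    · change w q * a q * (w q)⁻¹ ∈ quaternionSubgroup q
      rw [w_mul_a, mul_inv_cancel_right]
      exact Subgroup.subset_closure (by simp)
    · change w q * b q * (w q)⁻¹ ∈ quaternionSubgroup q
      rw [w_mul_b, mul_inv_cancel_right]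
      exact mul_mem (Subgroup.subset_closure (by simp)) (Subgroup.subset_closure (by simp))
  exact hle hx

def normalForm (q : ℕ) (p : Fin 4 × Fin 2 × Fin (3 ^ q)) : Tprime q :=
  b q ^ (p.1 : ℕ) * a q ^ (p.2.1 : ℕ) * w q ^ (p.2.2 : ℕ)

theorem mul_w_pow_mem_range_normalForm {x : Tprime q} (hx : x ∈ quaternionSubgroup q)
    (k : ℕ) :
    x * w q ^ k ∈ Set.range (normalForm q) := by
  obtain ⟨p, rfl⟩ := quaternionSubgroup_subset_range hx
  refine ⟨(p.1, p.2, ⟨k % 3 ^ q, Nat.mod_lt _ (by positivity)⟩), ?_⟩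
  rw [normalForm, ← pow_eq_pow_mod _ w_pow_three_pow]
  rfl

theorem closure_b_a_w : Subgroup.closure {b q, a q, w q} = ⊤ := by
  rw [← PresentedGroup.closure_range_of]
  congr 1
  ext x
  simp [Fin.exists_fin_succ, b, a, w, eq_comm]

theorem normalForm_surjective : Function.Surjective (normalForm q) := by
  have hsub := Subgroup.closure_subset_of_smul_subset (Set.finite_range (normalForm q))
    (by simpa using mul_w_pow_mem_range_normalForm (one_mem _) 0) (X := {b q, a q, w q})
    ?_
  · intro g
    exact hsub (by simp [closure_b_a_w])
  rintro x hx _ ⟨_, ⟨⟨s, e, t⟩, rfl⟩, rfl⟩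
  have hQ : b q ^ (s : ℕ) * a q ^ (e : ℕ) ∈ quaternionSubgroup q :=
    mul_mem (pow_mem (Subgroup.subset_closure (by simp)) _)
      (pow_mem (Subgroup.subset_closure (by simp)) _)
  dsimp only [smul_eq_mul, normalForm]
  rw [← mul_assoc]
  rcases hx with rfl | rfl | rfl
  · exact mul_w_pow_mem_range_normalForm (mul_mem (Subgroup.subset_closure (by simp)) hQ) _
  · exact mul_w_pow_mem_range_normalForm (mul_mem (Subgroup.subset_closure (by simp)) hQ) _
  · rw [← inv_mul_cancel_right (w q * _) (w q), mul_assoc _ (w q), ← pow_succ']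
    exact mul_w_pow_mem_range_normalForm (w_mul_mul_inv_mem hQ) _

def lift {H : Type*} [Group H] (b' a' w' : H) (ha : a' ^ 2 = b' ^ 2)
    (hab : (a' * b') ^ 2 = a' ^ 2) (ha4 : a' ^ 4 = 1) (hw : w' ^ 3 ^ q = 1)
    (hwa : w' * a' = b' * w') (hwb : w' * b' = a' * b' * w') : Tprime q →* H :=
  PresentedGroup.toGroup (f := ![b', a', w']) <| by
    rintro r (rfl | rfl | rfl | rfl | rfl | rfl) <;> simp [*]

section lift

variable {H : Type*} [Group H] {b' a' w' : H} {ha : a' ^ 2 = b' ^ 2}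
  {hab : (a' * b') ^ 2 = a' ^ 2} {ha4 : a' ^ 4 = 1} {hw : w' ^ 3 ^ q = 1}
  {hwa : w' * a' = b' * w'} {hwb : w' * b' = a' * b' * w'}

@[simp] theorem lift_b : lift b' a' w' ha hab ha4 hw hwa hwb (b q) = b' :=
  PresentedGroup.toGroup.of _

@[simp] theorem lift_a : lift b' a' w' ha hab ha4 hw hwa hwb (a q) = a' :=
  PresentedGroup.toGroup.of _

@[simp] theorem lift_w : lift b' a' w' ha hab ha4 hw hwa hwb (w q) = w' :=
  PresentedGroup.toGroup.of _

end lift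

namespace GL23

-- `a` and `b` generate the quaternion subgroup of `SL(2, 𝔽₃)`, and `w` (of order 3)
-- conjugates `a ↦ b ↦ ab`.
def a : GL (Fin 2) (ZMod 3) := ⟨!![0, 2; 1, 0], !![0, 1; 2, 0], by decide, by decide⟩

def b : GL (Fin 2) (ZMod 3) := ⟨!![1, 1; 1, 2], !![2, 2; 2, 1], by decide, by decide⟩

def w : GL (Fin 2) (ZMod 3) := ⟨!![1, 1; 0, 1], !![1, 2; 0, 1], by decide, by decide⟩

theorem w_pow_three_pow (hq : 1 ≤ q) : w ^ 3 ^ q = 1 := by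
  obtain ⟨k, rfl⟩ := Nat.exists_eq_add_of_le' hq
  rw [pow_succ, pow_mul', show w ^ 3 = 1 by decide, one_pow]

theorem quaternionForm_injective :
    Function.Injective fun p : Fin 4 × Fin 2 => b ^ (p.1 : ℕ) * a ^ (p.2 : ℕ) := by
  decide

end GL23

def toGL (hq : 1 ≤ q) : Tprime q →* GL (Fin 2) (ZMod 3) :=
  lift GL23.b GL23.a GL23.w (by decide) (by decide) (by decide) (GL23.w_pow_three_pow hq)
    (by decide) (by decide)

def toZMod (q : ℕ) : Tprime q →* Multiplicative (ZMod (3 ^ q)) :=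
  lift 1 1 (.ofAdd 1) (by simp) (by simp) (by simp) (by simp [← ofAdd_nsmul]) (by simp) (by simp)

theorem normalForm_injective (hq : 1 ≤ q) : Function.Injective (normalForm q) := by
  rintro ⟨s, e, t⟩ ⟨s', e', t'⟩ h
  have ht : t = t' := by
    have hzmod := congrArg (Multiplicative.toAdd ∘ toZMod q) h
    simp only [Function.comp_apply, normalForm, toZMod, map_mul, map_pow, lift_b, lift_a,
      lift_w, one_pow, one_mul, toAdd_pow, toAdd_ofAdd, nsmul_eq_mul, mul_one] at hzmod
    have hval := congrArg ZMod.val hzmod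
    rw [ZMod.val_cast_of_lt t.isLt, ZMod.val_cast_of_lt t'.isLt] at hval
    exact Fin.ext hval
  subst ht
  have hse := congrArg (toGL hq) h
  simp only [normalForm, toGL, map_mul, map_pow, lift_b, lift_a, lift_w, mul_left_inj] at hse
  simpa using GL23.quaternionForm_injective (a₁ := (s, e)) (a₂ := (s', e')) hse

end Tprime

/-- Every element of `T'_{8·3^q}` is uniquely of the form `b^s a^ε w^t` with `0 ≤ s < 4`,
`ε ∈ {0,1}`, `0 ≤ t < 3^q` (i.e. of the form `b^s w^t` or `b^s a w^t`); in particular the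
group has order `8·3^q`. -/
theorem normalForm_Tprime (q : ℕ) (hq : 1 ≤ q) :
    (∀ g : Tprime q, ∃! p : Fin 4 × Fin 2 × Fin (3 ^ q),
        g = Tprime.b q ^ (p.1 : ℕ) * Tprime.a q ^ (p.2.1 : ℕ) * Tprime.w q ^ (p.2.2 : ℕ)) ∧
      Nat.card (Tprime q) = 8 * 3 ^ q := by
  have hbij : Function.Bijective (Tprime.normalForm q) :=
    ⟨Tprime.normalForm_injective hq, Tprime.normalForm_surjective⟩
  refine ⟨fun g => ?_, ?_⟩
  · simpa only [Tprime.normalForm, eq_comm] using hbij.existsUnique g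
  · rw [← Nat.card_congr (Equiv.ofBijective _ hbij)]
    simp only [Nat.card_eq_fintype_card, Fintype.card_prod, Fintype.card_fin]
    ring
end

section
/- In the group T'_{8·3^q} with q ≥ 1, the center is the subgroup generated by b² and w³, which is cyclic of order 2·3^{q-1}. -/
namespace CenterTprimeProof

variable (q : ℕ)

local notation "A" => Tprime.a q
local notation "B" => Tprime.b q
local notation "W" => Tprime.w q

lemma rel_eq_one {r : FreeGroup (Fin 3)} (h : r ∈ TprimeRels q) :
    PresentedGroup.mk (TprimeRels q) r = 1 :=
  (QuotientGroup.eq_one_iff r).mpr (Subgroup.subset_normalClosure h)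

lemma of_eq_mk (x : Fin 3) :
    (PresentedGroup.of x : Tprime q) = PresentedGroup.mk (TprimeRels q) (FreeGroup.of x) := rfl

lemma hA2B2 : A ^ 2 = B ^ 2 := by
  have h := rel_eq_one q (r := (FreeGroup.of 1) ^ 2 * ((FreeGroup.of 0) ^ 2)⁻¹)
    (by simp [TprimeRels])
  simp only [map_mul, map_pow, map_inv] at h
  rw [Tprime.a, Tprime.b, of_eq_mk, of_eq_mk]
  rw [← mul_inv_eq_one]
  group at h ⊢
  exact h

lemma hABAB : A ^ 2 = (A * B) ^ 2 := by
  have h := rel_eq_one q (r := (FreeGroup.of 1) ^ 2 * ((FreeGroup.of 1 * FreeGroup.of 0) ^ 2)⁻¹)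
    (by simp [TprimeRels])
  simp only [map_mul, map_pow, map_inv] at h
  rw [Tprime.a, Tprime.b, of_eq_mk, of_eq_mk]
  rw [← mul_inv_eq_one]
  group at h ⊢
  exact h

lemma hA4 : A ^ 4 = 1 := by
  have h := rel_eq_one q (r := (FreeGroup.of 1) ^ 4) (by simp [TprimeRels])
  simpa only [map_mul, map_pow, map_inv, Tprime.a, of_eq_mk] using h

lemma hWpow : W ^ (3 ^ q) = 1 := by
  have h := rel_eq_one q (r := (FreeGroup.of 2) ^ (3 ^ q)) (by simp [TprimeRels])
  simpa only [map_mul, map_pow, map_inv, Tprime.w, of_eq_mk] using h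

lemma hWA : W * A = B * W := by
  have h := rel_eq_one q
    (r := (FreeGroup.of 2 * FreeGroup.of 1) * (FreeGroup.of 0 * FreeGroup.of 2)⁻¹)
    (by simp [TprimeRels])
  simp only [map_mul, map_pow, map_inv] at h
  rw [Tprime.a, Tprime.b, Tprime.w, of_eq_mk, of_eq_mk, of_eq_mk]
  rw [← mul_inv_eq_one]
  group at h ⊢
  exact h

lemma hWB : W * B = A * B * W := by
  have h := rel_eq_one q
    (r := (FreeGroup.of 2 * FreeGroup.of 0) *
      (FreeGroup.of 1 * FreeGroup.of 0 * FreeGroup.of 2)⁻¹)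
    (by simp [TprimeRels])
  simp only [map_mul, map_pow, map_inv] at h
  rw [Tprime.a, Tprime.b, Tprime.w, of_eq_mk, of_eq_mk, of_eq_mk]
  rw [← mul_inv_eq_one]
  group at h ⊢
  exact h


lemma hB2 : B ^ 2 = A ^ 2 := (hA2B2 q).symm

lemma hB4 : B ^ 4 = 1 := by
  have h : B ^ 4 = (B ^ 2) ^ 2 := by rw [← pow_mul]
  rw [h, hB2, ← pow_mul]
  exact hA4 q

lemma hBAB : B * A * B = A := by
  have h2 := hABAB q
  rw [sq, sq] at h2
  have h3 : A * A = A * (B * A * B) := by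
    rw [h2]; simp only [mul_assoc]
  exact (mul_left_cancel h3).symm

lemma hABA : A * B * A = B := by
  have h2 := (hABAB q).symm
  rw [hA2B2 q, sq, sq] at h2
  have h3 : A * B * A * B = B * B := by
    rw [← h2]; simp only [mul_assoc]
  exact mul_right_cancel h3

lemma hA3 : A⁻¹ = A ^ 3 := by
  symm
  rw [eq_inv_iff_mul_eq_one, ← pow_succ]
  exact hA4 q

lemma hAB3 : A * B = B * A ^ 3 := by
  rw [← hA3, eq_mul_inv_iff_mul_eq, mul_assoc]
  exact hABA q

lemma hWAB : W * (A * B) = A * W := by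
  rw [← mul_assoc, hWA, mul_assoc, hWB, ← mul_assoc, ← mul_assoc, hBAB]

lemma hWB2 : W * B ^ 2 = B ^ 2 * W := by
  have h : W * B ^ 2 = W * B * B := by rw [sq, mul_assoc]
  rw [h, hWB, mul_assoc, hWB, ← mul_assoc, ← mul_assoc]
  rw [mul_assoc (A*B) A B, show A * B * (A * B) = (A * B) ^ 2 from (sq _).symm, ← hABAB, hA2B2]

lemma hWA2 : W * A ^ 2 = A ^ 2 * W := by
  rw [← hB2, hWB2]

lemma hW3A : W ^ 3 * A = A * W ^ 3 := by
  have h3 : ∀ x : Tprime q, W ^ 3 * x = W * (W * (W * x)) := by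
    intro x; simp only [pow_succ, pow_zero, one_mul, mul_assoc]
  have h3' : ∀ x : Tprime q, x * W ^ 3 = x * (W * (W * W)) := by
    intro x; simp only [pow_succ, pow_zero, one_mul, mul_assoc]
  rw [h3, h3', hWA, ← mul_assoc W B W, hWB, mul_assoc (A*B) W W, ← mul_assoc W (A*B) _, hWAB, mul_assoc A W (W*W)]

lemma hW3B : W ^ 3 * B = B * W ^ 3 := by
  have h3 : ∀ x : Tprime q, W ^ 3 * x = W * (W * (W * x)) := by
    intro x; simp only [pow_succ, pow_zero, one_mul, mul_assoc]
  have h3' : ∀ x : Tprime q, x * W ^ 3 = x * (W * (W * W)) := by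
    intro x; simp only [pow_succ, pow_zero, one_mul, mul_assoc]
  rw [h3, h3', hWB, ← mul_assoc W (A*B) W, hWAB, mul_assoc A W W, ← mul_assoc W A _, hWA,
    mul_assoc B W _]

lemma central_of_comm {z : Tprime q} (h0 : z * B = B * z) (h1 : z * A = A * z)
    (h2 : z * W = W * z) : z ∈ Subgroup.center (Tprime q) := by
  rw [Subgroup.mem_center_iff]
  intro g
  have hg : g ∈ Subgroup.centralizer {z} := by
    refine PresentedGroup.generated_by _ _ (fun j => ?_) g
    rw [Subgroup.mem_centralizer_iff]
    rintro h rfl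
    fin_cases j
    · exact h0
    · exact h1
    · exact h2
  exact (Subgroup.mem_centralizer_iff.mp hg z rfl).symm

lemma hB2_center : B ^ 2 ∈ Subgroup.center (Tprime q) := by
  refine central_of_comm q ?_ ?_ ?_
  · rw [sq]; simp only [mul_assoc]
  · rw [← hA2B2]
    exact (Commute.refl A).pow_left 2
  · exact (hWB2 q).symm

lemma hW3_center : W ^ 3 ∈ Subgroup.center (Tprime q) := by
  refine central_of_comm q (hW3B q) (hW3A q) ?_
  rw [← pow_succ, ← pow_succ']


abbrev Q8 := QuaternionGroup 2

def rhoFun : Q8 → Q8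
  | .a i => (![.a 0, .xa 0, .a 2, .xa 2] : Fin 4 → Q8) i
  | .xa i => (![.xa 3, .a 3, .xa 1, .a 1] : Fin 4 → Q8) i

def rhoAut : MulAut Q8 where
  toFun := rhoFun
  invFun := rhoFun ∘ rhoFun
  left_inv := by decide
  right_inv := by decide
  map_mul' := by decide

lemma rho_cube : rhoAut ^ 3 = 1 := by
  ext x
  revert x
  decide

section zmodPowHom

variable {G : Type*} [Group G] {n : ℕ} [NeZero n]

omit [NeZero n] in
lemma pow_eq_pow_of_zmod_eq (g : G) (h : g ^ n = 1) {a b : ℕ}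
    (hab : (a : ZMod n) = (b : ZMod n)) : g ^ a = g ^ b :=
  pow_eq_pow_iff_modEq.mpr
    (((ZMod.natCast_eq_natCast_iff _ _ _).mp hab).of_dvd (orderOf_dvd_of_pow_eq_one h))

/-- The homomorphism `Multiplicative (ZMod n) →* G` sending `1` to an element `g` with
`g ^ n = 1`. -/
def zmodPowHom (g : G) (h : g ^ n = 1) : Multiplicative (ZMod n) →* G where
  toFun k := g ^ (Multiplicative.toAdd k).val
  map_one' := by simp
  map_mul' a b := by
    simp only [toAdd_mul, ← pow_add]
    exact (pow_eq_pow_of_zmod_eq g h (by push_cast [ZMod.natCast_val, ZMod.cast_id]; rfl)).symm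

@[simp] lemma zmodPowHom_apply (g : G) (h : g ^ n = 1) (k : ZMod n) :
    zmodPowHom g h (Multiplicative.ofAdd k) = g ^ k.val := rfl

lemma zmodPowHom_apply' (g : G) (h : g ^ n = 1) (k : Multiplicative (ZMod n)) :
    zmodPowHom g h k = g ^ (Multiplicative.toAdd k).val := rfl

lemma zmodPowHom_natCast (g : G) (h : g ^ n = 1) (m : ℕ) :
    zmodPowHom g h (Multiplicative.ofAdd ((m : ℕ) : ZMod n)) = g ^ m := by
  rw [zmodPowHom_apply]
  exact pow_eq_pow_of_zmod_eq g h (by push_cast [ZMod.natCast_val, ZMod.cast_id]; rfl)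

end zmodPowHom

open Multiplicative

def alpha : Multiplicative (ZMod 4) →* Tprime q := zmodPowHom (Tprime.a q) (hA4 q)

lemma alphaB (i : ZMod 4) : alpha q (ofAdd i) * B = B * alpha q (ofAdd (-i)) := by
  have key : ∀ m : ℕ, A ^ m * B = B * A ^ (3 * m) := by
    intro m
    induction m with
    | zero => simp
    | succ m ih =>
      calc A ^ (m+1) * B = A ^ m * (A * B) := by rw [pow_succ, mul_assoc]
        _ = A ^ m * B * A ^ 3 := by rw [hAB3, ← mul_assoc]
        _ = B * A ^ (3*m) * A ^ 3 := by rw [ih]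
        _ = B * A ^ (3*(m+1)) := by
            rw [mul_assoc, ← pow_add, show 3*m+3 = 3*(m+1) by ring]
  show A ^ i.val * B = B * A ^ (-i).val
  rw [key]
  congr 1
  refine pow_eq_pow_of_zmod_eq _ (hA4 q) ?_
  have h' : ∀ j : ZMod 4, 3 * j = -j := by decide
  push_cast [ZMod.natCast_val, ZMod.cast_id]
  rw [h']

lemma hB2alpha : B ^ 2 = alpha q (ofAdd ((2:ℕ) : ZMod 4)) := by
  rw [alpha, zmodPowHom_natCast]
  exact hB2 q

def f1Fun : Q8 → Tprime q
  | .a i => alpha q (ofAdd i)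
  | .xa i => Tprime.b q * alpha q (ofAdd i)

def f1 : Q8 →* Tprime q := MonoidHom.mk' (f1Fun q) (by
  intro x y
  rcases x with i | i <;> rcases y with j | j
  · rw [QuaternionGroup.a_mul_a]
    show alpha q (ofAdd (i + j)) = alpha q (ofAdd i) * alpha q (ofAdd j)
    rw [ofAdd_add, map_mul]
  · rw [QuaternionGroup.a_mul_xa]
    show Tprime.b q * alpha q (ofAdd (j - i)) = alpha q (ofAdd i) * (Tprime.b q * alpha q (ofAdd j))
    rw [← mul_assoc, alphaB q i, mul_assoc, ← map_mul, ← ofAdd_add]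
    rw [show -i + j = j - i by ring]
  · rw [QuaternionGroup.xa_mul_a]
    show Tprime.b q * alpha q (ofAdd (i + j)) = Tprime.b q * alpha q (ofAdd i) * alpha q (ofAdd j)
    rw [mul_assoc, ← map_mul, ← ofAdd_add]
  · rw [QuaternionGroup.xa_mul_xa]
    show alpha q (ofAdd (((2:ℕ) : ZMod 4) + j - i)) =
      Tprime.b q * alpha q (ofAdd i) * (Tprime.b q * alpha q (ofAdd j))
    have hBB : Tprime.b q * Tprime.b q = alpha q (ofAdd ((2:ℕ) : ZMod 4)) := by
      rw [← hB2alpha q, sq]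
    rw [← mul_assoc, mul_assoc (Tprime.b q) _ _, alphaB q i, ← mul_assoc, hBB,
      ← map_mul, ← ofAdd_add, ← map_mul, ← ofAdd_add]
    exact congrArg (alpha q) (congrArg ofAdd (by ring)))

lemma f1_a (i : ZMod (2*2)) : f1 q (.a i) = alpha q (ofAdd i) := rfl
lemma f1_xa (i : ZMod (2*2)) : f1 q (.xa i) = Tprime.b q * alpha q (ofAdd i) := rfl

lemma f1_a1 : f1 q (.a 1) = A := by
  rw [f1_a, show (1 : ZMod (2*2)) = ((1:ℕ) : ZMod 4) by norm_cast, alpha, zmodPowHom_natCast,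
    pow_one]

lemma f1_xa0 : f1 q (.xa 0) = B := by
  rw [f1_xa, show (0 : ZMod (2*2)) = ((0:ℕ) : ZMod 4) by norm_cast, alpha, zmodPowHom_natCast,
    pow_zero, mul_one]

lemma f1_xa3 : f1 q (.xa 3) = B * A ^ 3 := by
  rw [f1_xa, show (3 : ZMod (2*2)) = ((3:ℕ) : ZMod 4) by norm_cast, alpha, zmodPowHom_natCast]

lemma q8_closure : Subgroup.closure ({.a 1, .xa 0} : Set Q8) = ⊤ := by
  rw [Subgroup.eq_top_iff']
  intro x
  have ha1 : (QuaternionGroup.a 1 : Q8) ∈ Subgroup.closure ({.a 1, .xa 0} : Set Q8) :=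
    Subgroup.subset_closure (by simp)
  have hxa0 : (QuaternionGroup.xa 0 : Q8) ∈ Subgroup.closure ({.a 1, .xa 0} : Set Q8) :=
    Subgroup.subset_closure (by simp)
  have hpow : ∀ i : ZMod (2*2), (QuaternionGroup.a i : Q8) = (QuaternionGroup.a 1) ^ i.val := by
    intro i
    rw [QuaternionGroup.a_one_pow]
    congr 1
    simp [ZMod.natCast_val, ZMod.cast_id]
  rcases x with i | i
  · rw [hpow i]
    exact pow_mem ha1 _
  · have : (QuaternionGroup.xa i : Q8) = QuaternionGroup.xa 0 * QuaternionGroup.a i := by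
      rw [QuaternionGroup.xa_mul_a, zero_add]
    rw [this, hpow i]
    exact mul_mem hxa0 (pow_mem ha1 _)

lemma f1_rho (x : Q8) : f1 q (rhoAut x) = W * f1 q x * W⁻¹ := by
  have hext : Set.EqOn (⇑((f1 q).comp rhoAut.toMonoidHom))
      (⇑((MulAut.conj W).toMonoidHom.comp (f1 q))) ({.a 1, .xa 0} : Set Q8) := by
    rintro x (rfl | rfl)
    · show f1 q (rhoAut (.a 1)) = W * f1 q (.a 1) * W⁻¹
      rw [show rhoAut (.a 1) = QuaternionGroup.xa 0 from rfl, f1_xa0, f1_a1,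
        eq_mul_inv_iff_mul_eq]
      exact (hWA q).symm
    · show f1 q (rhoAut (.xa 0)) = W * f1 q (.xa 0) * W⁻¹
      rw [show rhoAut (.xa 0) = QuaternionGroup.xa 3 from rfl, f1_xa3, f1_xa0, ← hAB3,
        eq_mul_inv_iff_mul_eq]
      exact (hWB q).symm
  have h2 := MonoidHom.eqOn_closure hext
  rw [q8_closure] at h2
  have h3 := h2 (Set.mem_univ x)
  simpa using h3

lemma f1_rho_pow (m : ℕ) (x : Q8) :
    f1 q ((rhoAut ^ m) x) = W ^ m * f1 q x * (W ^ m)⁻¹ := by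
  induction m generalizing x with
  | zero => simp
  | succ m ih =>
    have h : (rhoAut ^ (m+1)) x = (rhoAut ^ m) (rhoAut x) := by
      rw [pow_succ]
      rfl
    rw [h, ih, f1_rho]
    simp only [pow_succ, mul_inv_rev, mul_assoc]


open SemidirectProduct

instance instNeZeroPow3 (p : ℕ) : NeZero (3 ^ (p+1)) := ⟨pow_ne_zero _ (by norm_num)⟩

lemma rho_pow_eq_one (p : ℕ) : rhoAut ^ (3 ^ (p+1)) = 1 := by
  rw [pow_succ', pow_mul, rho_cube, one_pow]

def phi (p : ℕ) : Multiplicative (ZMod (3 ^ (p+1))) →* MulAut Q8 :=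
  zmodPowHom rhoAut (rho_pow_eq_one p)

abbrev GG (p : ℕ) := SemidirectProduct Q8 (Multiplicative (ZMod (3 ^ (p+1)))) (phi p)

lemma phi_natCast (p m : ℕ) : phi p (ofAdd ((m : ℕ) : ZMod (3 ^ (p+1)))) = rhoAut ^ m :=
  zmodPowHom_natCast _ _ m

lemma phi_one (p : ℕ) : phi p (ofAdd (1 : ZMod (3 ^ (p+1)))) = rhoAut := by
  rw [show (1 : ZMod (3 ^ (p+1))) = ((1:ℕ) : ZMod (3 ^ (p+1))) by norm_cast, phi_natCast, pow_one]

def fgen (p : ℕ) : Fin 3 → GG p := ![inl (.xa 0), inl (.a 1), inr (ofAdd 1)]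

lemma fgen_rels (p : ℕ) : ∀ r ∈ TprimeRels (p+1), FreeGroup.lift (fgen p) r = 1 := by
  intro r hr
  have h1 : FreeGroup.lift (fgen p) (FreeGroup.of 0) = inl (.xa 0) := by
    rw [FreeGroup.lift_apply_of]; rfl
  have h2 : FreeGroup.lift (fgen p) (FreeGroup.of 1) = inl (.a 1) := by
    rw [FreeGroup.lift_apply_of]; rfl
  have h3 : FreeGroup.lift (fgen p) (FreeGroup.of 2) = inr (ofAdd 1) := by
    rw [FreeGroup.lift_apply_of]; rfl
  have key : ∀ x : Q8, inr (φ := phi p) (ofAdd 1) * inl x =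
      inl (rhoAut x) * inr (ofAdd 1) := by
    intro x
    have := inl_aut (φ := phi p) (ofAdd 1) x
    rw [phi_one] at this
    rw [this, mul_assoc (inr (ofAdd 1) * inl x), ← map_mul, inv_mul_cancel]
    simp
  simp only [TprimeRels, Set.mem_insert_iff, Set.mem_singleton_iff] at hr
  rcases hr with rfl | rfl | rfl | rfl | rfl | rfl
  · rw [map_mul, map_inv, map_pow, map_pow, h1, h2, ← map_pow, ← map_pow, ← map_inv, ← map_mul,
      map_eq_one_iff _ inl_injective]
    decide
  · rw [map_mul, map_inv, map_pow, map_pow, map_mul, h1, h2, ← map_mul, ← map_pow, ← map_pow,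
      ← map_inv, ← map_mul, map_eq_one_iff _ inl_injective]
    decide
  · rw [map_pow, h2, ← map_pow, map_eq_one_iff _ inl_injective]
    decide
  · rw [map_pow, h3, ← map_pow]
    have h5 : (ofAdd (1 : ZMod (3 ^ (p+1)))) ^ (3 ^ (p+1)) = 1 := by
      rw [← ofAdd_nsmul]
      have h6 : (3 ^ (p+1)) • (1 : ZMod (3 ^ (p+1))) = 0 := by
        rw [nsmul_eq_mul, mul_one, ZMod.natCast_self]
      rw [h6]
      rfl
    rw [h5, map_one]
  · rw [map_mul, map_inv, map_mul, map_mul, h1, h2, h3, mul_inv_eq_one, key]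
    rfl
  · rw [map_mul, map_inv, map_mul, map_mul, map_mul, h1, h2, h3, mul_inv_eq_one, key, ← map_mul]
    rfl

def theta (p : ℕ) : Tprime (p+1) →* GG p := PresentedGroup.toGroup (fgen_rels p)

lemma theta_b (p : ℕ) : theta p (Tprime.b (p+1)) = inl (.xa 0) := by
  rw [Tprime.b, theta, PresentedGroup.toGroup.of]; rfl

lemma theta_a (p : ℕ) : theta p (Tprime.a (p+1)) = inl (.a 1) := by
  rw [Tprime.a, theta, PresentedGroup.toGroup.of]; rfl

lemma theta_w (p : ℕ) : theta p (Tprime.w (p+1)) = inr (ofAdd 1) := by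
  rw [Tprime.w, theta, PresentedGroup.toGroup.of]; rfl

def f2 (p : ℕ) : Multiplicative (ZMod (3 ^ (p+1))) →* Tprime (p+1) :=
  zmodPowHom (Tprime.w (p+1)) (hWpow (p+1))

lemma f2_one (p : ℕ) : f2 p (ofAdd (1 : ZMod (3 ^ (p+1)))) = Tprime.w (p+1) := by
  rw [f2, show (1 : ZMod (3 ^ (p+1))) = ((1:ℕ) : ZMod (3 ^ (p+1))) by norm_cast,
    zmodPowHom_natCast, pow_one]

lemma compat (p : ℕ) (g : Multiplicative (ZMod (3 ^ (p+1)))) :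
    (f1 (p+1)).comp ((phi p g).toMonoidHom) =
      (MulAut.conj (f2 p g)).toMonoidHom.comp (f1 (p+1)) := by
  ext x
  show f1 (p+1) ((rhoAut ^ (Multiplicative.toAdd g).val) x) =
    Tprime.w (p+1) ^ (Multiplicative.toAdd g).val * f1 (p+1) x *
      (Tprime.w (p+1) ^ (Multiplicative.toAdd g).val)⁻¹
  exact f1_rho_pow (p+1) _ x

def eta (p : ℕ) : GG p →* Tprime (p+1) :=
  SemidirectProduct.lift (f1 (p+1)) (f2 p) (compat p)

lemma eta_theta (p : ℕ) (z : Tprime (p+1)) : eta p (theta p z) = z := by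
  have h : (eta p).comp (theta p) = MonoidHom.id _ := by
    apply PresentedGroup.ext
    intro x
    fin_cases x
    · show eta p (theta p (Tprime.b (p+1))) = Tprime.b (p+1)
      rw [theta_b, eta, lift_inl, f1_xa0]
    · show eta p (theta p (Tprime.a (p+1))) = Tprime.a (p+1)
      rw [theta_a, eta, lift_inl, f1_a1]
    · show eta p (theta p (Tprime.w (p+1))) = Tprime.w (p+1)
      rw [theta_w, eta, lift_inr, f2_one]
  exact DFunLike.congr_fun h z

lemma theta_injective (p : ℕ) : Function.Injective (theta p) :=
  Function.LeftInverse.injective (eta_theta p)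

lemma theta_w_pow (p m : ℕ) :
    theta p (Tprime.w (p+1) ^ m) = inr (ofAdd ((m : ℕ) : ZMod (3 ^ (p+1)))) := by
  rw [map_pow, theta_w, ← map_pow, ← ofAdd_nsmul, nsmul_eq_mul, mul_one]

lemma theta_surjective (p : ℕ) : Function.Surjective (theta p) := by
  have hinl : ∀ y : Q8, (inl y : GG p) ∈ (theta p).range := by
    have hle : (⊤ : Subgroup Q8) ≤ ((theta p).range.comap (inl : Q8 →* GG p)) := by
      rw [← q8_closure]
      refine Subgroup.closure_le _ |>.mpr ?_
      rintro y (rfl | rfl)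
      · exact Subgroup.mem_comap.mpr ⟨Tprime.a (p+1), theta_a p⟩
      · exact Subgroup.mem_comap.mpr ⟨Tprime.b (p+1), theta_b p⟩
    exact fun y => Subgroup.mem_comap.mp (hle (Subgroup.mem_top y))
  have hinr : ∀ k : Multiplicative (ZMod (3 ^ (p+1))), (inr k : GG p) ∈ (theta p).range := by
    intro k
    refine ⟨Tprime.w (p+1) ^ (Multiplicative.toAdd k).val, ?_⟩
    rw [theta_w_pow]
    congr 1
    simp [ZMod.natCast_val, ZMod.cast_id]
  intro g
  obtain ⟨x, k⟩ := g
  have hmk : (⟨x, k⟩ : GG p) = inl x * inr k := mk_eq_inl_mul_inr k x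
  rw [hmk]
  exact mul_mem (hinl x) (hinr k)


lemma theta_b2 (p : ℕ) : theta p (Tprime.b (p+1) ^ 2) = inl (.a 2) := by
  rw [map_pow, theta_b, ← map_pow]
  congr 1

lemma theta_w3 (p : ℕ) :
    theta p (Tprime.w (p+1) ^ 3) = inr (ofAdd ((3 : ℕ) : ZMod (3 ^ (p+1)))) :=
  theta_w_pow p 3

lemma closure_le_center (q : ℕ) :
    Subgroup.closure {Tprime.b q ^ 2, Tprime.w q ^ 3} ≤ Subgroup.center (Tprime q) := by
  refine (Subgroup.closure_le _).mpr ?_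
  rintro y (rfl | rfl)
  · exact hB2_center q
  · exact hW3_center q

set_option maxHeartbeats 1000000 in
lemma center_le_closure (p : ℕ) :
    Subgroup.center (Tprime (p+1)) ≤
      Subgroup.closure {Tprime.b (p+1) ^ 2, Tprime.w (p+1) ^ 3} := by
  intro z hz
  set g := theta p z with hgdef
  have hcent : ∀ u : GG p, u * g = g * u := by
    intro u
    obtain ⟨v, rfl⟩ := theta_surjective p u
    rw [hgdef, ← map_mul, ← map_mul, Subgroup.mem_center_iff.mp hz v]
  have hrho : rhoAut g.left = g.left := by
    have h := congrArg SemidirectProduct.left (hcent (inr (ofAdd 1)))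
    simp only [mul_left, left_inr, right_inr, one_mul, map_one, mul_one] at h
    rw [phi_one] at h
    exact h
  have hxval : g.left = QuaternionGroup.a 0 ∨ g.left = QuaternionGroup.a 2 := by
    have hfix : ∀ x : Q8, rhoAut x = x → x = QuaternionGroup.a 0 ∨ x = QuaternionGroup.a 2 := by
      decide
    exact hfix _ hrho
  have hkfix : (phi p g.right) (QuaternionGroup.a 1) = QuaternionGroup.a 1 := by
    have h := congrArg SemidirectProduct.left (hcent (inl (QuaternionGroup.a 1)))
    simp only [mul_left, left_inl, right_inl, map_one, one_mul, MulAut.one_apply] at h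
    -- h : a 1 * g.left = g.left * phi p g.right (a 1)
    rcases hxval with hx | hx
    · rw [hx] at h
      have h2 : (QuaternionGroup.a 0 : Q8) * QuaternionGroup.a 1 =
          QuaternionGroup.a 0 * ((phi p) g.right) (QuaternionGroup.a 1) := by
        rw [← h]
        decide
      exact (mul_left_cancel h2).symm
    · rw [hx] at h
      have h2 : (QuaternionGroup.a 2 : Q8) * QuaternionGroup.a 1 =
          QuaternionGroup.a 2 * ((phi p) g.right) (QuaternionGroup.a 1) := by
        rw [← h]
        decide
      exact (mul_left_cancel h2).symm
  have h3dvd : 3 ∣ (Multiplicative.toAdd g.right).val := by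
    have hphival : phi p g.right = rhoAut ^ (Multiplicative.toAdd g.right).val := rfl
    set m := (Multiplicative.toAdd g.right).val with hm
    have hsplit : rhoAut ^ m = rhoAut ^ (m % 3) := by
      conv_lhs => rw [← Nat.div_add_mod m 3]
      rw [pow_add, pow_mul, rho_cube, one_pow, one_mul]
    rw [hphival, hsplit] at hkfix
    rcases (by omega : m % 3 = 0 ∨ m % 3 = 1 ∨ m % 3 = 2) with h0 | h0 | h0
    · exact Nat.dvd_of_mod_eq_zero h0
    · rw [h0] at hkfix
      exact absurd hkfix (by decide)
    · rw [h0] at hkfix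
      exact absurd hkfix (by decide)
  obtain ⟨t, ht⟩ := h3dvd
  have hmem : g ∈ Subgroup.map (theta p)
      (Subgroup.closure {Tprime.b (p+1) ^ 2, Tprime.w (p+1) ^ 3}) := by
    rw [MonoidHom.map_closure, Set.image_insert_eq, Set.image_singleton, theta_b2, theta_w3]
    have hgdecomp : g = inl g.left * inr g.right := mk_eq_inl_mul_inr g.right g.left
    rw [hgdecomp]
    refine mul_mem ?_ ?_
    · rcases hxval with hx | hx <;> rw [hx]
      · rw [show (QuaternionGroup.a 0 : Q8) = 1 from rfl, map_one]
        exact one_mem _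
      · exact Subgroup.subset_closure (Set.mem_insert _ _)
    · have hr : g.right = ofAdd ((3 : ℕ) : ZMod (3 ^ (p+1))) ^ t := by
        rw [← ofAdd_nsmul]
        have : (Multiplicative.toAdd g.right) = t • ((3 : ℕ) : ZMod (3 ^ (p+1))) := by
          rw [nsmul_eq_mul]
          push_cast
          rw [show ((t : ZMod (3 ^ (p+1))) * 3 = ((3 * t : ℕ) : ZMod (3 ^ (p+1)))) by push_cast; ring,
            ← ht]
          simp [ZMod.natCast_val, ZMod.cast_id]
        rw [← this, ofAdd_toAdd]
      have hmem2 : (inr (ofAdd ((3 : ℕ) : ZMod (3 ^ (p+1)))) : GG p) ∈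
          Subgroup.closure {(inl (QuaternionGroup.a 2) : GG p),
            inr (ofAdd ((3 : ℕ) : ZMod (3 ^ (p+1))))} :=
        Subgroup.subset_closure (Set.mem_insert_iff.mpr (Or.inr rfl))
      rw [hr, map_pow]
      exact pow_mem hmem2 t
  obtain ⟨y, hy, hyz⟩ := hmem
  rwa [theta_injective p hyz] at hy

lemma hB2ne (p : ℕ) : Tprime.b (p+1) ^ 2 ≠ 1 := by
  intro h
  have h1 := congrArg (theta p) h
  rw [theta_b2, map_one] at h1
  have h2 : (QuaternionGroup.a 2 : Q8) = 1 := inl_injective (φ := phi p) (by rw [map_one]; exact h1)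
  exact absurd h2 (by decide)

lemma horderB2 (p : ℕ) : orderOf (Tprime.b (p+1) ^ 2) = 2 :=
  orderOf_eq_prime (by rw [← pow_mul]; exact hB4 (p+1)) (hB2ne p)

lemma horderW3 (p : ℕ) : orderOf (Tprime.w (p+1) ^ 3) = 3 ^ p := by
  rw [← orderOf_injective (theta p) (theta_injective p), theta_w3,
    orderOf_injective (inr : Multiplicative (ZMod (3 ^ (p+1))) →* GG p) inr_injective,
    orderOf_ofAdd_eq_addOrderOf, ZMod.addOrderOf_coe 3 (NeZero.ne _)]
  rw [Nat.gcd_eq_right (dvd_pow_self 3 p.succ_ne_zero), pow_succ,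
    Nat.mul_div_cancel _ (by norm_num)]

lemma hcommBW (p : ℕ) : Commute (Tprime.b (p+1) ^ 2) (Tprime.w (p+1) ^ 3) :=
  (Subgroup.mem_center_iff.mp (hB2_center (p+1)) (Tprime.w (p+1) ^ 3)).symm

lemma horderg0 (p : ℕ) :
    orderOf (Tprime.b (p+1) ^ 2 * Tprime.w (p+1) ^ 3) = 2 * 3 ^ p := by
  rw [(hcommBW p).orderOf_mul_eq_mul_orderOf_of_coprime, horderB2, horderW3]
  rw [horderB2, horderW3]
  exact Nat.Coprime.pow_right _ (by norm_num)

lemma hB2mem (p : ℕ) :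
    Tprime.b (p+1) ^ 2 ∈ Subgroup.zpowers (Tprime.b (p+1) ^ 2 * Tprime.w (p+1) ^ 3) := by
  have hpow : (Tprime.b (p+1) ^ 2 * Tprime.w (p+1) ^ 3) ^ (3 ^ p) = Tprime.b (p+1) ^ 2 := by
    rw [(hcommBW p).mul_pow]
    have h1 : (Tprime.w (p+1) ^ 3) ^ (3 ^ p) = 1 := by
      rw [← pow_mul, show 3 * 3 ^ p = 3 ^ (p+1) from (pow_succ' 3 p).symm]
      exact hWpow (p+1)
    have h2 : (Tprime.b (p+1) ^ 2) ^ (3 ^ p) = Tprime.b (p+1) ^ 2 := by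
      have h3 := pow_eq_pow_of_zmod_eq (n := 2) (Tprime.b (p+1) ^ 2)
        (by rw [← pow_mul]; exact hB4 (p+1)) (a := 3 ^ p) (b := 1)
        (by push_cast; rw [show ((3 : ZMod 2)) = 1 by decide, one_pow])
      rw [h3, pow_one]
    rw [h1, h2, mul_one]
  exact Subgroup.mem_zpowers_iff.mpr ⟨(3 ^ p : ℕ), by rw [zpow_natCast, hpow]⟩

lemma closure_eq_zpowers (p : ℕ) :
    Subgroup.closure {Tprime.b (p+1) ^ 2, Tprime.w (p+1) ^ 3} =
      Subgroup.zpowers (Tprime.b (p+1) ^ 2 * Tprime.w (p+1) ^ 3) := by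
  apply le_antisymm
  · refine (Subgroup.closure_le _).mpr ?_
    rintro y (rfl | rfl)
    · exact hB2mem p
    · have h := mul_mem (inv_mem (hB2mem p))
        (Subgroup.mem_zpowers (Tprime.b (p+1) ^ 2 * Tprime.w (p+1) ^ 3))
      rwa [inv_mul_cancel_left] at h
  · rw [Subgroup.zpowers_le]
    exact mul_mem (Subgroup.subset_closure (Set.mem_insert _ _))
      (Subgroup.subset_closure (Set.mem_insert_iff.mpr (Or.inr rfl)))

lemma isCyclic_zpowers {H : Type*} [Group H] (g : H) : IsCyclic (Subgroup.zpowers g) := by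
  refine ⟨⟨⟨g, Subgroup.mem_zpowers g⟩, ?_⟩⟩
  rintro ⟨x, hx⟩
  obtain ⟨m, rfl⟩ := Subgroup.mem_zpowers_iff.mp hx
  exact Subgroup.mem_zpowers_iff.mpr ⟨m, Subtype.ext (by simp)⟩

end CenterTprimeProof

/-- In `T'_{8·3^q}` with `q ≥ 1`, the center is `⟨b², w³⟩`, cyclic of order `2·3^{q-1}`. -/
theorem center_Tprime (q : ℕ) (hq : 1 ≤ q) :
    Subgroup.center (Tprime q) = Subgroup.closure {Tprime.b q ^ 2, Tprime.w q ^ 3} ∧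
      IsCyclic (Subgroup.center (Tprime q)) ∧
      Nat.card (Subgroup.center (Tprime q)) = 2 * 3 ^ (q - 1) := by
  obtain ⟨p, rfl⟩ : ∃ p, q = p + 1 := ⟨q - 1, (Nat.succ_pred_eq_of_pos hq).symm⟩
  have hcenter : Subgroup.center (Tprime (p+1)) =
      Subgroup.closure {Tprime.b (p+1) ^ 2, Tprime.w (p+1) ^ 3} :=
    le_antisymm (CenterTprimeProof.center_le_closure p) (CenterTprimeProof.closure_le_center (p+1))
  refine ⟨hcenter, ?_, ?_⟩
  · rw [hcenter, CenterTprimeProof.closure_eq_zpowers p]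
    exact CenterTprimeProof.isCyclic_zpowers _
  · rw [hcenter, CenterTprimeProof.closure_eq_zpowers p, Nat.card_zpowers,
      CenterTprimeProof.horderg0 p]
    norm_num
end

section
/- In D'_{n·2^q} with n odd (n > 1, q > 1), the conjugacy class of w consists of all elements u^s w with 0 ≤ s < n (n elements), and every element of the form u^s w^{2t+1} with 2t+1 odd of order 2^q lies in a conjugate of the cyclic subgroup ⟨w⟩. -/
/-! Conjugation by `w` negates the `u`-exponent of `u ^ k * w ^ l`, and when `l` is odd conjugation
by `u` raises it by `2`. Hence the set `{u ^ k * w}` is stable under conjugation by the generators,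
so it contains the conjugacy class of `w`; conversely, as `2` is invertible modulo the odd number
`n`, conjugating `u ^ s * w ^ l` by a suitable power of `u` reaches every `u ^ s' * w ^ l`, in
particular `w ^ l` itself. -/

/-- Relations of the dicyclic-type group
`D'_{n·2^q} = ⟨u, w | uⁿ = w^{2^q} = 1, uwu = w⟩`,
with `u` the letter `0` and `w` the letter `1`. -/
def DprimeRels (n q : ℕ) : Set (FreeGroup (Fin 2)) :=
  { (FreeGroup.of 0) ^ n,
    (FreeGroup.of 1) ^ (2 ^ q),
    (FreeGroup.of 0 * FreeGroup.of 1 * FreeGroup.of 0) * (FreeGroup.of 1)⁻¹ }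

/-- The dicyclic-type group `D'_{n·2^q}`. -/
abbrev Dprime (n q : ℕ) := PresentedGroup (DprimeRels n q)

/-- The generator `u` of `D'_{n·2^q}`. -/
def Dprime.u (n q : ℕ) : Dprime n q := PresentedGroup.of 0

/-- The generator `w` of `D'_{n·2^q}`. -/
def Dprime.w (n q : ℕ) : Dprime n q := PresentedGroup.of 1

section Relation

variable {G : Type*} [Group G] {u w : G}

theorem semiconjBy_u_of_mul_mul_eq (h : u * w * u = w) : SemiconjBy w u u⁻¹ :=
  (inv_mul_eq_iff_eq_mul.mpr (by rw [← mul_assoc, h])).symm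

theorem semiconjBy_u_inv_of_mul_mul_eq (h : u * w * u = w) : SemiconjBy w u⁻¹ u :=
  mul_inv_eq_iff_eq_mul.mpr h.symm

theorem commute_w_sq_u_of_mul_mul_eq (h : u * w * u = w) : Commute (w ^ 2) u := by
  rw [sq]
  exact (semiconjBy_u_inv_of_mul_mul_eq h).mul_left (semiconjBy_u_of_mul_mul_eq h)

theorem semiconjBy_zpow_of_odd_of_mul_mul_eq (h : u * w * u = w) {l : ℤ} (hl : Odd l) :
    SemiconjBy (w ^ l) u⁻¹ u := by
  obtain ⟨t, rfl⟩ := hl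
  rw [zpow_add_one, zpow_mul, zpow_ofNat]
  exact ((commute_w_sq_u_of_mul_mul_eq h).zpow_left t).semiconjBy.mul_left
    (semiconjBy_u_inv_of_mul_mul_eq h)

theorem w_conj_of_mul_mul_eq (h : u * w * u = w) (k l : ℤ) :
    w * (u ^ k * w ^ l) * w⁻¹ = u ^ (-k) * w ^ l := by
  rw [← mul_assoc, ((semiconjBy_u_of_mul_mul_eq h).zpow_right k).eq]; group

theorem u_conj_of_mul_mul_eq (h : u * w * u = w) (k : ℤ) {l : ℤ} (hl : Odd l) :
    u * (u ^ k * w ^ l) * u⁻¹ = u ^ (k + 2) * w ^ l := by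
  rw [mul_assoc, mul_assoc, (semiconjBy_zpow_of_odd_of_mul_mul_eq h hl).eq]; group

theorem u_pow_conj_of_mul_mul_eq (h : u * w * u = w) (j : ℕ) (k : ℤ) {l : ℤ} (hl : Odd l) :
    u ^ j * (u ^ k * w ^ l) * (u ^ j)⁻¹ = u ^ (k + 2 * j) * w ^ l := by
  induction j with
  | zero => simp
  | succ j ih =>
    calc u ^ (j + 1) * (u ^ k * w ^ l) * (u ^ (j + 1))⁻¹
        = u * (u ^ j * (u ^ k * w ^ l) * (u ^ j)⁻¹) * u⁻¹ := by group
      _ = u ^ (k + 2 * ↑(j + 1)) * w ^ l := by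
        rw [ih, u_conj_of_mul_mul_eq h _ hl]; push_cast; ring_nf

theorem exists_conj_eq_zpow_mul_of_mul_mul_eq (h : u * w * u = w) {g : G}
    (hg : g ∈ Subgroup.closure {u, w}) {l : ℤ} (hl : Odd l) :
    ∃ k : ℤ, g * w ^ l * g⁻¹ = u ^ k * w ^ l := by
  suffices ∀ k : ℤ, ∃ k' : ℤ, g * (u ^ k * w ^ l) * g⁻¹ = u ^ k' * w ^ l by
    simpa using this 0
  induction hg using Subgroup.closure_induction'' with
  | mem x hx =>
    obtain rfl | rfl := hx
    · exact fun k => ⟨k + 2, u_conj_of_mul_mul_eq h k hl⟩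
    · exact fun k => ⟨-k, w_conj_of_mul_mul_eq h k l⟩
  | inv_mem x hx =>
    obtain rfl | rfl := hx
    · refine fun k => ⟨k - 2, ?_⟩
      have hconj := u_conj_of_mul_mul_eq h (k - 2) hl
      rw [sub_add_cancel] at hconj
      rw [← hconj]; group
    · refine fun k => ⟨-k, ?_⟩
      have hconj := w_conj_of_mul_mul_eq h (-k) l
      rw [neg_neg] at hconj
      rw [← hconj]; group
  | one => exact fun k => ⟨k, by group⟩
  | mul x y _ _ ihx ihy =>
    intro k
    obtain ⟨k₁, hk₁⟩ := ihy k
    obtain ⟨k₂, hk₂⟩ := ihx k₁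
    exact ⟨k₂, by rw [← hk₂, ← hk₁]; group⟩

end Relation

section Cyclic

variable {G : Type*} [Group G] {u : G} {n : ℕ}

theorem zpow_eq_zpow_of_modEq (hu : u ^ n = 1) {a b : ℤ} (h : a ≡ b [ZMOD n]) : u ^ a = u ^ b :=
  zpow_eq_zpow_iff_modEq.mpr (h.of_dvd (Int.natCast_dvd_natCast.mpr (orderOf_dvd_of_pow_eq_one hu)))

theorem exists_lt_pow_eq_zpow (hu : u ^ n = 1) (hn : 0 < n) (k : ℤ) : ∃ s < n, u ^ k = u ^ s := by
  have hn' : (0 : ℤ) < n := by exact_mod_cast hn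
  refine ⟨(k % n).toNat, by have := Int.emod_lt_of_pos k hn'; omega, ?_⟩
  rw [← zpow_natCast, Int.toNat_of_nonneg (Int.emod_nonneg _ hn'.ne')]
  exact zpow_eq_zpow_of_modEq hu (Int.mod_modEq k n).symm

end Cyclic

namespace Dprime

variable {n q : ℕ}

theorem u_pow_eq_one : u n q ^ n = 1 := by
  rw [u, PresentedGroup.of, ← map_pow]
  exact PresentedGroup.one_of_mem (by simp [DprimeRels])

theorem u_mul_w_mul_u : u n q * w n q * u n q = w n q :=
  PresentedGroup.mk_eq_mk_of_mul_inv_mem (by simp [DprimeRels])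

theorem closure_u_w : Subgroup.closure {u n q, w n q} = ⊤ := by
  rw [← PresentedGroup.closure_range_of]
  congr 1
  ext
  simp [Fin.exists_fin_two, u, w, eq_comm]

end Dprime

open Dprime in
theorem conjClass_w_Dprime_general (n q : ℕ) (hodd : Odd n) :
    ({x | IsConj (Dprime.w n q) x} =
        {x | ∃ s : ℕ, s < n ∧ x = Dprime.u n q ^ s * Dprime.w n q}) ∧
      ∀ s t : ℕ, orderOf (Dprime.u n q ^ s * Dprime.w n q ^ (2 * t + 1)) = 2 ^ q →
        ∃ g : Dprime n q,
          g * (Dprime.u n q ^ s * Dprime.w n q ^ (2 * t + 1)) * g⁻¹ ∈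
            Subgroup.zpowers (Dprime.w n q) := by
  obtain ⟨m, rfl⟩ := hodd
  have hrel : u (2 * m + 1) q * w (2 * m + 1) q * u (2 * m + 1) q = w (2 * m + 1) q :=
    u_mul_w_mul_u
  refine ⟨Set.ext fun x => ⟨fun hx => ?_, fun hx => ?_⟩, fun s t _ => ?_⟩
  · obtain ⟨g, rfl⟩ := isConj_iff.mp hx
    obtain ⟨k, hk⟩ :=
      exists_conj_eq_zpow_mul_of_mul_mul_eq hrel (closure_u_w ▸ Subgroup.mem_top g) odd_one
    obtain ⟨s, hs, hks⟩ :=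
      exists_lt_pow_eq_zpow (u_pow_eq_one (n := 2 * m + 1) (q := q)) (by omega) k
    exact ⟨s, hs, by simpa only [zpow_one, hks] using hk⟩
  · obtain ⟨s, -, rfl⟩ := hx
    -- `m + 1` is the inverse of `2` modulo `2 * m + 1`
    refine isConj_iff.mpr ⟨u _ q ^ (s * (m + 1)), ?_⟩
    have hconj := u_pow_conj_of_mul_mul_eq hrel (s * (m + 1)) 0 odd_one
    rw [zpow_zero, one_mul, zpow_one] at hconj
    rw [hconj, ← zpow_natCast _ s]
    congr 1
    exact zpow_eq_zpow_of_modEq u_pow_eq_one (Int.modEq_iff_dvd.mpr ⟨-s, by push_cast; ring⟩)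
  · refine ⟨u _ q ^ (s * m), ?_⟩
    have hconj := u_pow_conj_of_mul_mul_eq hrel (s * m) s (l := (2 * t + 1 : ℕ))
      (by exact_mod_cast odd_two_mul_add_one t)
    simp only [zpow_natCast] at hconj
    rw [hconj, zpow_eq_zpow_of_modEq u_pow_eq_one (b := 0)
      (Int.modEq_zero_iff_dvd.mpr ⟨s, by push_cast; ring⟩), zpow_zero, one_mul]
    exact Subgroup.npow_mem_zpowers _ _

/-- In `D'_{n·2^q}` with `n` odd, `n > 1`, `q > 1`: the conjugacy class of `w` is
`{u^s w | 0 ≤ s < n}`, and every element `u^s w^{2t+1}` (odd power of `w`) of order `2^q`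
lies in a conjugate of the cyclic subgroup `⟨w⟩`. -/
theorem conjClass_w_Dprime (n q : ℕ) (hodd : Odd n) (hn : 1 < n) (hq : 1 < q) :
    ({x | IsConj (Dprime.w n q) x} =
        {x | ∃ s : ℕ, s < n ∧ x = Dprime.u n q ^ s * Dprime.w n q}) ∧
      ∀ s t : ℕ, orderOf (Dprime.u n q ^ s * Dprime.w n q ^ (2 * t + 1)) = 2 ^ q →
        ∃ g : Dprime n q,
          g * (Dprime.u n q ^ s * Dprime.w n q ^ (2 * t + 1)) * g⁻¹ ∈
            Subgroup.zpowers (Dprime.w n q) :=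
  conjClass_w_Dprime_general n q hodd
end

section
/- The set of degrees of maps from L(m₁; r₁₁, r₁₂) to L(m₂; r₂₁, r₂₂) is exactly { j² r₂₁ r₂₂ (m₁m₂/gcd(m₁,m₂)²) [r₁₁]⁻¹_{(m₁)} [r₁₂]⁻¹_{(m₁)} + k m₂ : k ∈ Z, j = 0, 1, …, gcd(m₁,m₂) − 1 }. -/
/-- The set `D(L(m₁; r₁₁, r₁₂), L(m₂; r₂₁, r₂₂))` of degrees of maps between the two lens
spaces. By Olum's theorems, homomorphisms on fundamental groups `c₁ ↦ c₂^l` exist exactly for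
`m₂ ∣ l·m₁`, every such homomorphism is realized by a map, and the degree of any realizing map
is exactly the residue class mod `m₂` of `l²·r₂₁·r₂₂·(m₁/m₂)·[r₁₁]⁻¹·[r₁₂]⁻¹` (written with
the integer `l·m₁/m₂`); here `i₁, i₂` are multiplicative inverses of `r₁₁, r₁₂` mod `m₁`. -/
def lensDegreeSet (m₁ m₂ : ℕ) (r₂₁ r₂₂ i₁ i₂ : ℤ) : Set ℤ :=
  {d : ℤ | ∃ l : ℤ, (m₂ : ℤ) ∣ l * m₁ ∧
    d ≡ l * ((l * m₁) / m₂) * r₂₁ * r₂₂ * i₁ * i₂ [ZMOD (m₂ : ℤ)]}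

/-- The set of degrees of maps `L(m₁; r₁₁, r₁₂) → L(m₂; r₂₁, r₂₂)` is exactly
`{ j² r₂₁ r₂₂ (m₁m₂/gcd(m₁,m₂)²) [r₁₁]⁻¹ [r₁₂]⁻¹ + k m₂ : k ∈ ℤ, 0 ≤ j < gcd(m₁,m₂) }`. -/
theorem lensSpace_degree_set (m₁ m₂ : ℕ) (hm₁ : 0 < m₁) (hm₂ : 0 < m₂)
    (r₁₁ r₁₂ r₂₁ r₂₂ i₁ i₂ : ℤ)
    (hi₁ : r₁₁ * i₁ ≡ 1 [ZMOD (m₁ : ℤ)]) (hi₂ : r₁₂ * i₂ ≡ 1 [ZMOD (m₁ : ℤ)]) :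
    lensDegreeSet m₁ m₂ r₂₁ r₂₂ i₁ i₂ =
      {d : ℤ | ∃ j : ℕ, j < Nat.gcd m₁ m₂ ∧ ∃ k : ℤ,
        d = (j : ℤ) ^ 2 * r₂₁ * r₂₂ * (((m₁ : ℤ) * m₂) / (Nat.gcd m₁ m₂ : ℤ) ^ 2) * i₁ * i₂
          + k * m₂} := by
  have hg : 0 < Nat.gcd m₁ m₂ := Nat.gcd_pos_of_pos_left _ hm₁
  set g := Nat.gcd m₁ m₂ with hgdef
  obtain ⟨a, ha⟩ : g ∣ m₁ := Nat.gcd_dvd_left m₁ m₂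
  obtain ⟨b, hb⟩ : g ∣ m₂ := Nat.gcd_dvd_right m₁ m₂
  have hbpos : 0 < b := by
    rcases Nat.eq_zero_or_pos b with h | h
    · subst h; simp at hb; omega
    · exact h
  have hgz : (g:ℤ) ≠ 0 := by exact_mod_cast hg.ne'
  have hbz : (b:ℤ) ≠ 0 := by exact_mod_cast hbpos.ne'
  have hcop : Nat.Coprime a b := by
    have h := Nat.coprime_div_gcd_div_gcd (m := m₁) (n := m₂) hg
    rwa [← hgdef, ha, hb, Nat.mul_div_cancel_left _ hg, Nat.mul_div_cancel_left _ hg] at h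
  have hcopZ : IsCoprime (b:ℤ) (a:ℤ) := by
    rw [Nat.isCoprime_iff_coprime]
    exact hcop.symm
  have hab : ((m₁:ℤ) * m₂) / (g:ℤ)^2 = (a:ℤ)*(b:ℤ) := by
    have hgz2 : ((g:ℤ)^2) ≠ 0 := pow_ne_zero _ hgz
    rw [ha, hb]; push_cast
    rw [show (g:ℤ)*a*((g:ℤ)*b) = (g:ℤ)^2*((a:ℤ)*b) by ring, Int.mul_ediv_cancel_left _ hgz2]
  ext d
  simp only [lensDegreeSet, Set.mem_setOf_eq, hab]
  constructor
  · rintro ⟨l, hdvd, hmod⟩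
    have hbl : (b:ℤ) ∣ l := by
      have h1 : ((g:ℤ)*b) ∣ (g:ℤ) * (l * a) := by
        have : ((m₂:ℤ)) ∣ l * m₁ := hdvd
        rw [ha, hb] at this; push_cast at this
        calc ((g:ℤ)*b) ∣ l * ((g:ℤ)*a) := this
          _ = (g:ℤ) * (l * a) := by ring
      have h2 : (b:ℤ) ∣ l * a := (mul_dvd_mul_iff_left hgz).mp h1
      exact hcopZ.dvd_of_dvd_mul_right h2
    obtain ⟨t, ht⟩ := hbl
    have hdiv : (l * m₁) / m₂ = t * a := by
      rw [ht, ha, hb]; push_cast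
      rw [show (b:ℤ)*t*((g:ℤ)*a) = ((g:ℤ)*b)*(t*a) by ring,
        Int.mul_ediv_cancel_left _ (mul_ne_zero hgz hbz)]
    rw [hdiv, ht] at hmod
    refine ⟨(t % (g:ℤ)).toNat, ?_, ?_⟩
    · have h1 : t % (g:ℤ) < g := Int.emod_lt_of_pos t (by exact_mod_cast hg)
      omega
    · have hjeq : ((t % (g:ℤ)).toNat : ℤ) = t % (g:ℤ) :=
        Int.toNat_of_nonneg (Int.emod_nonneg t hgz)
      set j : ℤ := t % (g:ℤ) with hjdef
      -- m₂ ∣ (t^2 - j^2) * (a*b)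
      obtain ⟨s, hs⟩ : (g:ℤ) ∣ t - j := Int.dvd_self_sub_of_emod_eq rfl
      have hkey : ((m₂:ℤ)) ∣ (t^2 - j^2) * ((a:ℤ)*b) := by
        refine ⟨s * (t + j) * a, ?_⟩
        have : t^2 - j^2 = (t - j) * (t + j) := by ring
        rw [this, hs, hb]; push_cast; ring
      have hmod2 : ((m₂:ℤ)) ∣
          ((b:ℤ)*t * (t * a) * r₂₁ * r₂₂ * i₁ * i₂) - d := (Int.modEq_iff_dvd.mp hmod)
      have hfinal : ((m₂:ℤ)) ∣ d - (j^2 * r₂₁ * r₂₂ * ((a:ℤ)*b) * i₁ * i₂) := by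
        have h3 : d - (j^2 * r₂₁ * r₂₂ * ((a:ℤ)*b) * i₁ * i₂) =
            ((t^2 - j^2) * ((a:ℤ)*b)) * (r₂₁ * r₂₂ * i₁ * i₂)
            - (((b:ℤ)*t * (t * a) * r₂₁ * r₂₂ * i₁ * i₂) - d) := by ring
        rw [h3]
        exact dvd_sub (hkey.mul_right _) hmod2
      obtain ⟨k, hk⟩ := hfinal
      exact ⟨k, by rw [hjeq]; linarith⟩
  · rintro ⟨j, hj, k, hk⟩
    refine ⟨(j:ℤ) * b, ?_, ?_⟩
    · refine ⟨(j:ℤ) * a, ?_⟩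
      rw [ha, hb]; push_cast; ring
    · have hdiv : ((j:ℤ) * b * m₁) / m₂ = (j:ℤ) * a := by
        rw [ha, hb]; push_cast
        rw [show (j:ℤ)*b*((g:ℤ)*a) = ((g:ℤ)*b)*((j:ℤ)*a) by ring,
          Int.mul_ediv_cancel_left _ (mul_ne_zero hgz hbz)]
      rw [hdiv]
      have : ((m₂:ℤ)) ∣ ((j:ℤ)*b * ((j:ℤ)*a) * r₂₁ * r₂₂ * i₁ * i₂) - d := by
        refine ⟨-k, ?_⟩
        rw [hk]; ring
      exact Int.modEq_iff_dvd.mpr this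
end

section
/- The outer automorphism group of the quaternion group Q₈ = D*_{4·2} is isomorphic to the symmetric group S₃. -/
/-- The subgroup of inner automorphisms of a group. -/
def Inn (G : Type*) [Group G] : Subgroup (MulAut G) := (MulAut.conj (G := G)).range

instance Inn.normal (G : Type*) [Group G] : (Inn G).Normal := by
  constructor
  rintro f ⟨g, rfl⟩ σ
  refine ⟨σ g, ?_⟩
  ext x
  simp only [MulAut.conj_apply, MulAut.mul_apply]
  rw [map_mul, map_mul, map_inv, show σ (σ⁻¹ x) = x from MulEquiv.apply_symm_apply σ x]

/-- The outer automorphism group `Out(G) = Aut(G)/Inn(G)`. -/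
abbrev Out (G : Type*) [Group G] := MulAut G ⧸ Inn G

open QuaternionGroup

abbrev Q8 := QuaternionGroup 2

def qrep : Fin 3 → Q8
  | 0 => a 1
  | 1 => xa 0
  | 2 => xa 1

def qc : Q8 → Fin 3
  | .a _ => 0
  | .xa i => if i = 0 ∨ i = 2 then 1 else 2

theorem qc_qrep : ∀ i, qc (qrep i) = i := by decide
theorem qrep_sq : ∀ i, (qrep i) ^ 2 ≠ 1 := by decide
theorem classify : ∀ x : Q8, x ^ 2 ≠ 1 → x = qrep (qc x) ∨ x = (qrep (qc x))⁻¹ := by decide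
theorem qc_inv : ∀ x : Q8, x ^ 2 ≠ 1 → qc x⁻¹ = qc x := by decide

theorem sq_ne (σ : MulAut Q8) {x : Q8} (hx : x ^ 2 ≠ 1) : (σ x) ^ 2 ≠ 1 := by
  rw [← map_pow]
  intro h
  exact hx (σ.injective (h.trans (map_one σ).symm))

theorem key (σ : MulAut Q8) {x : Q8} (hx : x ^ 2 ≠ 1) :
    qc (σ (qrep (qc x))) = qc (σ x) := by
  rcases classify x hx with h | h
  · rw [← h]
  · conv_rhs => rw [h]
    rw [map_inv, qc_inv _ (sq_ne σ (qrep_sq _))]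

def qf (σ : MulAut Q8) (i : Fin 3) : Fin 3 := qc (σ (qrep i))

theorem qf_mul (σ τ : MulAut Q8) (i : Fin 3) : qf (σ * τ) i = qf σ (qf τ i) := by
  unfold qf
  rw [key σ (sq_ne τ (qrep_sq i))]
  rfl

theorem qf_one (i : Fin 3) : qf 1 i = i := qc_qrep i

def Φ : MulAut Q8 →* Equiv.Perm (Fin 3) where
  toFun σ := ⟨qf σ, qf σ⁻¹,
    fun i => by rw [← qf_mul, inv_mul_cancel, qf_one],
    fun i => by rw [← qf_mul, mul_inv_cancel, qf_one]⟩
  map_one' := Equiv.ext qf_one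
  map_mul' σ τ := Equiv.ext (qf_mul σ τ)

theorem conj_qc : ∀ (g : Q8) (i : Fin 3), qc (g * qrep i * g⁻¹) = i := by decide

theorem aut_ext (σ τ : MulAut Q8) (h1 : σ (a 1) = τ (a 1))
    (h2 : σ (xa 0) = τ (xa 0)) : σ = τ := by
  have ha : ∀ i : ZMod 4, σ (a i) = τ (a i) := by
    intro i
    have : (a i : Q8) = a 1 ^ i.val := by
      rw [a_one_pow]
      congr 1
      simp [ZMod.natCast_val, ZMod.cast_id]
    rw [this, map_pow, map_pow, h1]
  apply MulEquiv.ext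
  rintro (i | i)
  · exact ha i
  · have : (QuaternionGroup.xa i : Q8) = a (-i) * xa 0 := by
      rw [a_mul_xa, sub_neg_eq_add, zero_add]
    rw [this, map_mul, map_mul, ha, h2]

theorem classify0 : ∀ x : Q8, x ^ 2 ≠ 1 → qc x = 0 → x = a 1 ∨ x = a 3 := by decide
theorem classify1 : ∀ x : Q8, x ^ 2 ≠ 1 → qc x = 1 → x = xa 0 ∨ x = xa 2 := by decide

theorem a1_sq : ((a 1 : Q8)) ^ 2 ≠ 1 := by decide
theorem xa0_sq : ((xa 0 : Q8)) ^ 2 ≠ 1 := by decide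

theorem ker_eq : Φ.ker = Inn Q8 := by
  ext σ
  simp only [MonoidHom.mem_ker]
  constructor
  · intro hσ
    have h0 : qc (σ (a 1)) = 0 := by simpa [Φ, qf, qrep] using DFunLike.congr_fun hσ 0
    have h2 : qc (σ (xa 0)) = 1 := by simpa [Φ, qf, qrep] using DFunLike.congr_fun hσ 1
    rcases classify0 _ (sq_ne σ a1_sq) h0 with h1 | h1 <;>
      rcases classify1 _ (sq_ne σ xa0_sq) h2 with h3 | h3
    · exact ⟨1, (aut_ext σ _ (by rw [h1]; decide) (by rw [h3]; decide)).symm⟩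
    · exact ⟨a 1, (aut_ext σ _ (by rw [h1]; decide) (by rw [h3]; decide)).symm⟩
    · exact ⟨xa 0, (aut_ext σ _ (by rw [h1]; decide) (by rw [h3]; decide)).symm⟩
    · exact ⟨xa 1, (aut_ext σ _ (by rw [h1]; decide) (by rw [h3]; decide)).symm⟩
  · rintro ⟨g, rfl⟩
    apply Equiv.ext
    intro i
    exact conj_qc g i

def sfun : Q8 → Q8
  | .a i => if i = 0 then a 0 else if i = 1 then xa 0 else if i = 2 then a 2 else xa 2
  | .xa i => if i = 0 then a 1 else if i = 1 then xa 3 else if i = 2 then a 3 else xa 1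

def σs : MulAut Q8 :=
  { toFun := sfun, invFun := sfun,
    left_inv := fun x => by revert x; decide,
    right_inv := fun x => by revert x; decide,
    map_mul' := by decide }

def rfun : Q8 → Q8
  | .a i => if i = 0 then a 0 else if i = 1 then xa 0 else if i = 2 then a 2 else xa 2
  | .xa i => if i = 0 then xa 1 else if i = 1 then a 1 else if i = 2 then xa 3 else a 3

def rinv : Q8 → Q8
  | .a i => if i = 0 then a 0 else if i = 1 then xa 1 else if i = 2 then a 2 else xa 3
  | .xa i => if i = 0 then a 1 else if i = 1 then xa 0 else if i = 2 then a 3 else xa 2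

def σr : MulAut Q8 :=
  { toFun := rfun, invFun := rinv,
    left_inv := fun x => by revert x; decide,
    right_inv := fun x => by revert x; decide,
    map_mul' := by decide }

theorem Φ_surj : Function.Surjective Φ := by
  intro p
  have h : ∀ q : Equiv.Perm (Fin 3), ∃ m : Fin 3, ∃ k : Fin 2,
      Φ σr ^ (m : ℕ) * Φ σs ^ (k : ℕ) = q := by decide
  obtain ⟨m, k, hmk⟩ := h p
  exact ⟨σr ^ (m : ℕ) * σs ^ (k : ℕ), by rw [map_mul, map_pow, map_pow]; exact hmk⟩

/-- The outer automorphism group of the quaternion group `Q₈` is isomorphic to `S₃`. -/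
theorem out_quaternionGroup :
    Nonempty (Out (QuaternionGroup 2) ≃* Equiv.Perm (Fin 3)) :=
  ⟨(QuotientGroup.quotientMulEquivOfEq ker_eq.symm).trans
    (QuotientGroup.quotientKerEquivOfSurjective Φ Φ_surj)⟩
end
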